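/- If the quantum system 𝕊 is secure with respect to policy ↝, i.e. K(𝕊,↝) = 0, then for each agent a ∈ A there exists a pseudo-distance δ_a on reachable density operators satisfying: (step consistency) δ_a(𝓔_{b,c}(ρ), 𝓔_{b,c}(σ)) ≤ δ_a(ρ,σ) for all b ∈ A, c ∈ C; (observation consistency) d_a(ρ,σ) ≤ δ_a(ρ,σ); and (local respect of ↝) ¬(b ↝ a) implies δ_a(ρ, 𝓔_{b,c}(ρ)) = 0 for all c ∈ C and all reachable ρ. -/

import Mathlib

open scoped Classical ComplexOrder
open Matrix Kronecker

noncomputable section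

/-- A density operator: positive semidefinite with trace 1. -/
def IsDensity {d : Type} [Fintype d] [DecidableEq d] (ρ : Matrix d d ℂ) : Prop :=
  ρ.PosSemidef ∧ ρ.trace = 1

/-- A super-operator: a linear, positive, trace-preserving map on matrices. -/
def IsSuperOp {d : Type} [Fintype d] [DecidableEq d]
    (F : Matrix d d ℂ → Matrix d d ℂ) : Prop :=
  IsLinearMap ℂ F ∧ (∀ ρ : Matrix d d ℂ, ρ.PosSemidef → (F ρ).PosSemidef) ∧
    (∀ ρ : Matrix d d ℂ, (F ρ).trace = ρ.trace)

/-- A finite family of matrices (the data of a measurement). -/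
structure PMeas (d : Type) where
  m : ℕ
  E : Fin m → Matrix d d ℂ

/-- The family is a POVM: positive semidefinite elements summing to the identity. -/
def PMeas.IsPOVM {d : Type} [Fintype d] [DecidableEq d] (P : PMeas d) : Prop :=
  (∀ i, (P.E i).PosSemidef) ∧ ∑ i, P.E i = 1

/-- The distance between outcome distributions of a measurement on two states. -/
def dE {d : Type} [Fintype d] (P : PMeas d) (ρ σ : Matrix d d ℂ) : ℝ :=
  (1 / 2) * ∑ i, ‖(P.E i * ρ).trace - (P.E i * σ).trace‖

/-- The measurement pseudo-distance induced by a set of measurements. -/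
def dM {d : Type} [Fintype d] (M : Set (PMeas d)) (ρ σ : Matrix d d ℂ) : ℝ :=
  sSup { x | ∃ P ∈ M, x = dE P ρ σ }

/-- A quantum system: initial state, agents, commands, super-operators, measurements. -/
structure QSystem (Agent Cmd d : Type) where
  ρ0 : Matrix d d ℂ
  A : Set Agent
  C : Set Cmd
  Ecmd : Agent → Cmd → Matrix d d ℂ → Matrix d d ℂ
  M : Agent → Set (PMeas d)

/-- Well-formedness: the initial state is a density operator, commands act as
super-operators, and agents measure with POVMs. -/
def QSystem.WellFormed {Agent Cmd d : Type} [Fintype d] [DecidableEq d]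
    (S : QSystem Agent Cmd d) : Prop :=
  IsDensity S.ρ0 ∧ (∀ a ∈ S.A, ∀ c ∈ S.C, IsSuperOp (S.Ecmd a c)) ∧
    (∀ a ∈ S.A, ∀ P ∈ S.M a, P.IsPOVM)

/-- Execution of a finite action sequence (composition of super-operators, in order). -/
def QSystem.run {Agent Cmd d : Type} (S : QSystem Agent Cmd d)
    (α : List (Agent × Cmd)) (ρ : Matrix d d ℂ) : Matrix d d ℂ :=
  α.foldl (fun τ p => S.Ecmd p.1 p.2 τ) ρ

/-- A sequence over A × C. -/
def QSystem.Valid {Agent Cmd d : Type} (S : QSystem Agent Cmd d)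
    (α : List (Agent × Cmd)) : Prop :=
  ∀ p ∈ α, p.1 ∈ S.A ∧ p.2 ∈ S.C

/-- `purge G D α` deletes from `α` every pair `(a, c)` with `a ∈ G` and `c ∈ D`. -/
def purge {Agent Cmd : Type} (G : Set Agent) (D : Set Cmd) :
    List (Agent × Cmd) → List (Agent × Cmd)
  | [] => []
  | p :: rest => if p.1 ∈ G ∧ p.2 ∈ D then purge G D rest else p :: purge G D rest

/-- A reachable density operator. -/
def QSystem.Reachable {Agent Cmd d : Type} (S : QSystem Agent Cmd d)
    (ρ : Matrix d d ℂ) : Prop :=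
  ∃ α, S.Valid α ∧ S.run α S.ρ0 = ρ

/-- `∇ a`: the set of agents from which information may not flow to `a`. -/
def nabla {Agent : Type} (pol : Agent → Agent → Prop) (a : Agent) : Set Agent :=
  { b | ¬ pol b a }

/-- The security degree `K(𝕊,↝)`. -/
def Kdeg {Agent Cmd d : Type} [Fintype d] (S : QSystem Agent Cmd d)
    (pol : Agent → Agent → Prop) : ℝ :=
  sSup { x | ∃ a ∈ S.A, ∃ α, S.Valid α ∧
    x = dM (S.M a) (S.run α S.ρ0) (S.run (purge (nabla pol a) Set.univ α) S.ρ0) }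

/-- The `t`-bounded security degree `K_t(𝕊,↝)`. -/
def Kt {Agent Cmd d : Type} [Fintype d] (S : QSystem Agent Cmd d)
    (pol : Agent → Agent → Prop) (t : ℕ) : ℝ :=
  sSup { x | ∃ a ∈ S.A, ∃ α, S.Valid α ∧ α.length ≤ t ∧
    x = dM (S.M a) (S.run α S.ρ0) (S.run (purge (nabla pol a) Set.univ α) S.ρ0) }

/-- The interference degree `Int(G₁, D | G₂)`. -/
def IntDeg {Agent Cmd d : Type} [Fintype d] (S : QSystem Agent Cmd d)
    (G1 : Set Agent) (D : Set Cmd) (G2 : Set Agent) : ℝ :=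
  sSup { x | ∃ a ∈ G2, ∃ α, S.Valid α ∧
    x = dM (S.M a) (S.run α S.ρ0) (S.run (purge G1 D α) S.ρ0) }

/-- Trace distance `d(ρ,σ) = (1/2)·tr √((ρ−σ)†(ρ−σ))`. -/
def traceDist {d : Type} [Fintype d] [DecidableEq d] (ρ σ : Matrix d d ℂ) : ℝ :=
  (1 / 2) * (((Matrix.posSemidef_conjTranspose_mul_self (ρ - σ)).1.eigenvectorUnitary.1 *
    diagonal (((↑) : ℝ → ℂ) ∘ Real.sqrt ∘ (Matrix.posSemidef_conjTranspose_mul_self (ρ - σ)).1.eigenvalues) *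
    (star (Matrix.posSemidef_conjTranspose_mul_self (ρ - σ)).1.eigenvectorUnitary : Matrix d d ℂ)).trace).re

end

/-!
Take for `δ_a(ρ, σ)` the largest distance `d_a` between the states obtained by running one and
the same continuation `β` from `ρ` and from `σ`. A supremum of uniformly bounded pseudo-distances
is a pseudo-distance (measurement distances of density operators are bounded by `1`); taking
`β = []` gives observation consistency, and prepending a step to `β` gives step consistency.
For local respect, let `ρ = 𝓔_α(ρ0)` and `b ∈ ∇a`: the runs `αβ` and `α(b,c)β` have the same
`∇a`-purge, and `K = 0` puts both at `d_a`-distance `0` from it.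
-/

open Set

section PseudoDist

variable {ι X Y : Type*}

structure IsPseudoDistOn (p : X → Prop) (D : X → X → ℝ) : Prop where
  nonneg : ∀ x y, p x → p y → 0 ≤ D x y
  self_eq_zero : ∀ x, p x → D x x = 0
  symm : ∀ x y, p x → p y → D x y = D y x
  triangle : ∀ x y z, p x → p y → p z → D x z ≤ D x y + D y z

namespace IsPseudoDistOn

variable {p : X → Prop} {q : Y → Prop} {D : Y → Y → ℝ}

theorem mono (hD : IsPseudoDistOn q D) {q' : Y → Prop} (h : ∀ y, q' y → q y) :
    IsPseudoDistOn q' D where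
  nonneg x y hx hy := hD.nonneg x y (h x hx) (h y hy)
  self_eq_zero x hx := hD.self_eq_zero x (h x hx)
  symm x y hx hy := hD.symm x y (h x hx) (h y hy)
  triangle x y z hx hy hz := hD.triangle x y z (h x hx) (h y hy) (h z hz)

theorem comp (hD : IsPseudoDistOn q D) {g : X → Y} (hg : ∀ x, p x → q (g x)) :
    IsPseudoDistOn p (fun x y => D (g x) (g y)) where
  nonneg x y hx hy := hD.nonneg _ _ (hg x hx) (hg y hy)
  self_eq_zero x hx := hD.self_eq_zero _ (hg x hx)
  symm x y hx hy := hD.symm _ _ (hg x hx) (hg y hy)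
  triangle x y z hx hy hz := hD.triangle _ _ _ (hg x hx) (hg y hy) (hg z hz)

end IsPseudoDistOn

/-- Written with `∃ i ∈ I, r = f i x y` so that `dM M` is literally `supDist M dE`. -/
noncomputable def supDist (I : Set ι) (f : ι → X → X → ℝ) (x y : X) : ℝ :=
  sSup {r | ∃ i ∈ I, r = f i x y}

variable {I : Set ι} {f : ι → X → X → ℝ} {x y : X}

theorem le_supDist {C : ℝ} (hC : ∀ i ∈ I, f i x y ≤ C) {i : ι} (hi : i ∈ I) :
    f i x y ≤ supDist I f x y :=
  le_csSup ⟨C, by rintro _ ⟨j, hj, rfl⟩; exact hC j hj⟩ ⟨i, hi, rfl⟩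

theorem supDist_le {C : ℝ} (hC₀ : 0 ≤ C) (hC : ∀ i ∈ I, f i x y ≤ C) : supDist I f x y ≤ C :=
  Real.sSup_le (by rintro _ ⟨i, hi, rfl⟩; exact hC i hi) hC₀

theorem supDist_nonneg (h : ∀ i ∈ I, 0 ≤ f i x y) : 0 ≤ supDist I f x y :=
  Real.sSup_nonneg (by rintro _ ⟨i, hi, rfl⟩; exact h i hi)

theorem supDist_eq_zero (h : ∀ i ∈ I, f i x y = 0) : supDist I f x y = 0 :=
  le_antisymm (supDist_le le_rfl fun i hi => (h i hi).le)
    (supDist_nonneg fun i hi => (h i hi).ge)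

theorem IsPseudoDistOn.supDist {p : X → Prop} (hf : ∀ i ∈ I, IsPseudoDistOn p (f i)) {C : ℝ}
    (hC : ∀ i ∈ I, ∀ x y, p x → p y → f i x y ≤ C) : IsPseudoDistOn p (supDist I f) where
  nonneg x y hx hy := supDist_nonneg fun i hi => (hf i hi).nonneg x y hx hy
  self_eq_zero x hx := supDist_eq_zero fun i hi => (hf i hi).self_eq_zero x hx
  symm x y hx hy := by
    unfold _root_.supDist
    congr 1
    ext r
    show (∃ i ∈ I, r = f i x y) ↔ ∃ i ∈ I, r = f i y x
    exact exists_congr fun i => and_congr_right fun hi => by rw [(hf i hi).symm x y hx hy]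
  triangle x y z hx hy hz := by
    refine supDist_le (add_nonneg (supDist_nonneg fun i hi => (hf i hi).nonneg x y hx hy)
      (supDist_nonneg fun i hi => (hf i hi).nonneg y z hy hz)) fun i hi => ?_
    exact ((hf i hi).triangle x y z hx hy hz).trans
      (add_le_add (le_supDist (fun j hj => hC j hj x y hx hy) hi)
        (le_supDist (fun j hj => hC j hj y z hy hz) hi))

end PseudoDist

section Measurement

variable {d : Type} [Fintype d]

theorem Matrix.PosSemidef.trace_mul_nonneg {E ρ : Matrix d d ℂ} (hE : E.PosSemidef)
    (hρ : ρ.PosSemidef) : 0 ≤ (E * ρ).trace := by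
  obtain ⟨B, rfl⟩ : ∃ B : Matrix d d ℂ, ρ = Bᴴ * B := by
    open MatrixOrder in exact CStarAlgebra.nonneg_iff_eq_star_mul_self.mp hρ.nonneg
  rw [← Matrix.mul_assoc, Matrix.trace_mul_cycle]
  exact (hE.mul_mul_conjTranspose_same B).trace_nonneg

theorem PMeas.IsPOVM.sum_trace_mul [DecidableEq d] {P : PMeas d} (hP : P.IsPOVM)
    (ρ : Matrix d d ℂ) : ∑ i, (P.E i * ρ).trace = ρ.trace := by
  rw [← Matrix.trace_sum, ← Finset.sum_mul, hP.2, Matrix.one_mul]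

theorem isPseudoDistOn_dE (P : PMeas d) : IsPseudoDistOn (fun _ => True) (dE P) where
  nonneg _ _ _ _ := by unfold dE; positivity
  self_eq_zero _ _ := by simp [dE]
  symm _ _ _ _ := by simp only [dE, norm_sub_rev]
  triangle ρ σ τ _ _ _ := by
    unfold dE
    rw [← mul_add, ← Finset.sum_add_distrib]
    gcongr with i
    exact norm_sub_le_norm_sub_add_norm_sub _ _ _

theorem dE_le_one [DecidableEq d] {P : PMeas d} (hP : P.IsPOVM) {ρ σ : Matrix d d ℂ}
    (hρ : IsDensity ρ) (hσ : IsDensity σ) : dE P ρ σ ≤ 1 := by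
  have hre (τ : Matrix d d ℂ) (hτ : IsDensity τ) : ∑ i, ‖(P.E i * τ).trace‖ = 1 := by
    simp_rw [← Complex.re_eq_norm.2 ((hP.1 _).trace_mul_nonneg hτ.1), ← Complex.re_sum,
      hP.sum_trace_mul, hτ.2, Complex.one_re]
  calc dE P ρ σ ≤ (1 / 2) * ∑ i, (‖(P.E i * ρ).trace‖ + ‖(P.E i * σ).trace‖) := by
        unfold dE
        gcongr with i
        exact norm_sub_le _ _
    _ = 1 := by rw [Finset.sum_add_distrib, hre ρ hρ, hre σ hσ]; norm_num

variable [DecidableEq d] {M : Set (PMeas d)}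

theorem isPseudoDistOn_dM (hM : ∀ P ∈ M, P.IsPOVM) :
    IsPseudoDistOn IsDensity (dM M) :=
  IsPseudoDistOn.supDist (fun P _ => (isPseudoDistOn_dE P).mono fun _ _ => trivial)
    fun P hP _ _ hρ hσ => dE_le_one (hM P hP) hρ hσ

theorem dM_le_one (hM : ∀ P ∈ M, P.IsPOVM) {ρ σ : Matrix d d ℂ} (hρ : IsDensity ρ)
    (hσ : IsDensity σ) : dM M ρ σ ≤ 1 :=
  supDist_le zero_le_one fun P hP => dE_le_one (hM P hP) hρ hσ

end Measurement

theorem purge_eq_filter {Agent Cmd : Type} (G : Set Agent) (D : Set Cmd)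
    (α : List (Agent × Cmd)) : purge G D α = α.filter fun p => !decide (p.1 ∈ G ∧ p.2 ∈ D) := by
  induction α with
  | nil => rfl
  | cons p α ih =>
    by_cases h : p.1 ∈ G ∧ p.2 ∈ D
    · rw [purge, if_pos h, List.filter_cons_of_neg (by simp [h]), ih]
    · rw [purge, if_neg h, List.filter_cons_of_pos (by simp [h]), ih]

namespace QSystem

variable {Agent Cmd d : Type} (S : QSystem Agent Cmd d)

theorem run_append (α β : List (Agent × Cmd)) (ρ : Matrix d d ℂ) :
    S.run (α ++ β) ρ = S.run β (S.run α ρ) :=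
  List.foldl_append

theorem run_cons (b : Agent) (c : Cmd) (β : List (Agent × Cmd)) (ρ : Matrix d d ℂ) :
    S.run ((b, c) :: β) ρ = S.run β (S.Ecmd b c ρ) :=
  rfl

variable {S}

theorem Valid.append {α β : List (Agent × Cmd)} (hα : S.Valid α) (hβ : S.Valid β) :
    S.Valid (α ++ β) :=
  fun p hp => (List.mem_append.mp hp).elim (hα p) (hβ p)

theorem Valid.cons {b : Agent} {c : Cmd} (hb : b ∈ S.A) (hc : c ∈ S.C)
    {β : List (Agent × Cmd)} (hβ : S.Valid β) : S.Valid ((b, c) :: β) :=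
  List.forall_mem_cons.mpr ⟨⟨hb, hc⟩, hβ⟩

theorem Valid.purge {α : List (Agent × Cmd)} (hα : S.Valid α) (G : Set Agent) (D : Set Cmd) :
    S.Valid (_root_.purge G D α) := by
  rw [purge_eq_filter]
  exact fun p hp => hα p (List.mem_of_mem_filter hp)

variable [Fintype d]

noncomputable def futureDist (S : QSystem Agent Cmd d) (a : Agent) :
    Matrix d d ℂ → Matrix d d ℂ → ℝ :=
  supDist {β | S.Valid β} fun β ρ σ => dM (S.M a) (S.run β ρ) (S.run β σ)

variable {a : Agent} {ρ σ : Matrix d d ℂ}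

theorem futureDist_le {C : ℝ} (hC₀ : 0 ≤ C)
    (hC : ∀ β, S.Valid β → dM (S.M a) (S.run β ρ) (S.run β σ) ≤ C) : S.futureDist a ρ σ ≤ C :=
  supDist_le hC₀ hC

theorem futureDist_eq_zero (h : ∀ β, S.Valid β → dM (S.M a) (S.run β ρ) (S.run β σ) = 0) :
    S.futureDist a ρ σ = 0 :=
  supDist_eq_zero h

variable [DecidableEq d]

theorem isDensity_run (hS : S.WellFormed) {α : List (Agent × Cmd)} (hα : S.Valid α)
    (hρ : IsDensity ρ) : IsDensity (S.run α ρ) := by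
  induction α generalizing ρ with
  | nil => exact hρ
  | cons p α ih =>
    obtain ⟨hp, hα⟩ := List.forall_mem_cons.mp hα
    obtain ⟨-, hpos, htr⟩ := hS.2.1 p.1 hp.1 p.2 hp.2
    exact ih hα ⟨hpos ρ hρ.1, (htr ρ).trans hρ.2⟩

theorem Reachable.isDensity (hS : S.WellFormed) (hρ : S.Reachable ρ) :
    IsDensity ρ := by
  obtain ⟨α, hα, rfl⟩ := hρ
  exact S.isDensity_run hS hα hS.1

variable {pol : Agent → Agent → Prop}

theorem dM_run_purge_le_Kdeg (hS : S.WellFormed) (ha : a ∈ S.A) {α : List (Agent × Cmd)}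
    (hα : S.Valid α) :
    dM (S.M a) (S.run α S.ρ0) (S.run (purge (nabla pol a) univ α) S.ρ0) ≤ Kdeg S pol := by
  refine le_csSup ⟨1, ?_⟩ ⟨a, ha, α, hα, rfl⟩
  rintro _ ⟨a', ha', α', hα', rfl⟩
  exact dM_le_one (hS.2.2 a' ha') (isDensity_run hS hα' hS.1)
    (isDensity_run hS (hα'.purge _ univ) hS.1)

theorem dM_run_purge_eq_zero (hS : S.WellFormed) (hsec : Kdeg S pol = 0) (ha : a ∈ S.A)
    {α : List (Agent × Cmd)} (hα : S.Valid α) :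
    dM (S.M a) (S.run α S.ρ0) (S.run (purge (nabla pol a) univ α) S.ρ0) = 0 :=
  le_antisymm (hsec ▸ dM_run_purge_le_Kdeg hS ha hα)
    ((isPseudoDistOn_dM (hS.2.2 a ha)).nonneg _ _ (isDensity_run hS hα hS.1)
      (isDensity_run hS (hα.purge _ univ) hS.1))

theorem isPseudoDistOn_futureDist (hS : S.WellFormed) (ha : a ∈ S.A) :
    IsPseudoDistOn IsDensity (S.futureDist a) :=
  IsPseudoDistOn.supDist
    (fun _ hβ => (isPseudoDistOn_dM (hS.2.2 a ha)).comp fun _ hρ => isDensity_run hS hβ hρ)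
    fun _ hβ _ _ hρ hσ => dM_le_one (hS.2.2 a ha) (isDensity_run hS hβ hρ) (isDensity_run hS hβ hσ)

theorem dM_run_le_futureDist (hS : S.WellFormed) (ha : a ∈ S.A)
    (hρ : IsDensity ρ) (hσ : IsDensity σ) {β : List (Agent × Cmd)} (hβ : S.Valid β) :
    dM (S.M a) (S.run β ρ) (S.run β σ) ≤ S.futureDist a ρ σ :=
  le_supDist (I := {β | S.Valid β}) (f := fun β ρ σ => dM (S.M a) (S.run β ρ) (S.run β σ))
    (fun _ hβ' => dM_le_one (hS.2.2 a ha) (isDensity_run hS hβ' hρ) (isDensity_run hS hβ' hσ)) hβ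

theorem futureDist_Ecmd_le (hS : S.WellFormed) (ha : a ∈ S.A) {b : Agent} (hb : b ∈ S.A)
    {c : Cmd} (hc : c ∈ S.C) (hρ : IsDensity ρ) (hσ : IsDensity σ) :
    S.futureDist a (S.Ecmd b c ρ) (S.Ecmd b c σ) ≤ S.futureDist a ρ σ := by
  refine futureDist_le ((isPseudoDistOn_futureDist hS ha).nonneg ρ σ hρ hσ) fun β hβ => ?_
  rw [← run_cons, ← run_cons]
  exact dM_run_le_futureDist hS ha hρ hσ (hβ.cons hb hc)

theorem dM_run_insert_eq_zero (hS : S.WellFormed) (hsec : Kdeg S pol = 0) (ha : a ∈ S.A)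
    {b : Agent} (hb : b ∈ S.A) (hba : ¬ pol b a) {c : Cmd} (hc : c ∈ S.C)
    {α β : List (Agent × Cmd)} (hα : S.Valid α) (hβ : S.Valid β) :
    dM (S.M a) (S.run (α ++ β) S.ρ0) (S.run (α ++ (b, c) :: β) S.ρ0) = 0 := by
  have hαβ : S.Valid (α ++ β) := hα.append hβ
  have hαbβ : S.Valid (α ++ (b, c) :: β) := hα.append (hβ.cons hb hc)
  have hpurge : purge (nabla pol a) univ (α ++ (b, c) :: β)
      = purge (nabla pol a) univ (α ++ β) := by
    simp [purge_eq_filter, List.filter_append, nabla, hba]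
  have hM := isPseudoDistOn_dM (hS.2.2 a ha)
  have hden {γ} (hγ : S.Valid γ) : IsDensity (S.run γ S.ρ0) := isDensity_run hS hγ hS.1
  have hle := hM.triangle _ _ _ (hden hαβ) (hden (hαβ.purge (nabla pol a) univ)) (hden hαbβ)
  rw [dM_run_purge_eq_zero hS hsec ha hαβ, ← hpurge,
    hM.symm _ _ (hden (hαbβ.purge (nabla pol a) univ)) (hden hαbβ),
    dM_run_purge_eq_zero hS hsec ha hαbβ, add_zero] at hle
  exact le_antisymm hle (hM.nonneg _ _ (hden hαβ) (hden hαbβ))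

theorem futureDist_Ecmd_eq_zero (hS : S.WellFormed) (hsec : Kdeg S pol = 0) (ha : a ∈ S.A)
    {b : Agent} (hb : b ∈ S.A) (hba : ¬ pol b a) {c : Cmd} (hc : c ∈ S.C)
    {α : List (Agent × Cmd)} (hα : S.Valid α) :
    S.futureDist a (S.run α S.ρ0) (S.Ecmd b c (S.run α S.ρ0)) = 0 := by
  refine futureDist_eq_zero fun β hβ => ?_
  have h := dM_run_insert_eq_zero hS hsec ha hb hba hc hα hβ
  rwa [run_append, run_append, run_cons] at h

end QSystem

theorem secure_implies_pseudo_distances_general {Agent Cmd d : Type}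
    [Fintype d] [DecidableEq d]
    (S : QSystem Agent Cmd d) (hS : S.WellFormed)
    (pol : Agent → Agent → Prop)
    (hsec : Kdeg S pol = 0) :
    ∃ δ : Agent → Matrix d d ℂ → Matrix d d ℂ → ℝ,
      (∀ a ∈ S.A, ∀ ρ σ, S.Reachable ρ → S.Reachable σ → 0 ≤ δ a ρ σ) ∧
      (∀ a ∈ S.A, ∀ ρ, S.Reachable ρ → δ a ρ ρ = 0) ∧
      (∀ a ∈ S.A, ∀ ρ σ, S.Reachable ρ → S.Reachable σ → δ a ρ σ = δ a σ ρ) ∧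
      (∀ a ∈ S.A, ∀ ρ σ τ, S.Reachable ρ → S.Reachable σ → S.Reachable τ →
        δ a ρ τ ≤ δ a ρ σ + δ a σ τ) ∧
      (∀ a ∈ S.A, ∀ b ∈ S.A, ∀ c ∈ S.C, ∀ ρ σ, S.Reachable ρ → S.Reachable σ →
        δ a (S.Ecmd b c ρ) (S.Ecmd b c σ) ≤ δ a ρ σ) ∧
      (∀ a ∈ S.A, ∀ ρ σ, S.Reachable ρ → S.Reachable σ → dM (S.M a) ρ σ ≤ δ a ρ σ) ∧
      (∀ a ∈ S.A, ∀ b ∈ S.A, ¬ pol b a → ∀ c ∈ S.C, ∀ ρ, S.Reachable ρ →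
        δ a ρ (S.Ecmd b c ρ) = 0) := by
  have hden {ρ} (hρ : S.Reachable ρ) : IsDensity ρ := hρ.isDensity hS
  have hδ (a) (ha : a ∈ S.A) : IsPseudoDistOn S.Reachable (S.futureDist a) :=
    (S.isPseudoDistOn_futureDist hS ha).mono fun _ => hden
  refine ⟨S.futureDist, fun a ha => (hδ a ha).nonneg, fun a ha => (hδ a ha).self_eq_zero,
    fun a ha => (hδ a ha).symm, fun a ha => (hδ a ha).triangle, ?_, ?_, ?_⟩
  · intro a ha b hb c hc ρ σ hρ hσ
    exact S.futureDist_Ecmd_le hS ha hb hc (hden hρ) (hden hσ)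
  · intro a ha ρ σ hρ hσ
    exact S.dM_run_le_futureDist hS ha (hden hρ) (hden hσ) (β := []) (List.forall_mem_nil _)
  · rintro a ha b hb hba c hc _ ⟨α, hα, rfl⟩
    exact S.futureDist_Ecmd_eq_zero hS hsec ha hb hba hc hα

/-- If `K(𝕊,↝) = 0`, then there is a family of pseudo-distances on reachable density
operators satisfying step consistency, observation consistency, and local respect of
the policy. -/
theorem secure_implies_pseudo_distances {Agent Cmd d : Type}
    [Fintype d] [DecidableEq d] [Nonempty d]
    (S : QSystem Agent Cmd d) (hS : S.WellFormed)
    (pol : Agent → Agent → Prop) (hpol : ∀ a ∈ S.A, pol a a)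
    (hsec : Kdeg S pol = 0) :
    ∃ δ : Agent → Matrix d d ℂ → Matrix d d ℂ → ℝ,
      (∀ a ∈ S.A, ∀ ρ σ, S.Reachable ρ → S.Reachable σ → 0 ≤ δ a ρ σ) ∧
      (∀ a ∈ S.A, ∀ ρ, S.Reachable ρ → δ a ρ ρ = 0) ∧
      (∀ a ∈ S.A, ∀ ρ σ, S.Reachable ρ → S.Reachable σ → δ a ρ σ = δ a σ ρ) ∧
      (∀ a ∈ S.A, ∀ ρ σ τ, S.Reachable ρ → S.Reachable σ → S.Reachable τ →
        δ a ρ τ ≤ δ a ρ σ + δ a σ τ) ∧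
      (∀ a ∈ S.A, ∀ b ∈ S.A, ∀ c ∈ S.C, ∀ ρ σ, S.Reachable ρ → S.Reachable σ →
        δ a (S.Ecmd b c ρ) (S.Ecmd b c σ) ≤ δ a ρ σ) ∧
      (∀ a ∈ S.A, ∀ ρ σ, S.Reachable ρ → S.Reachable σ → dM (S.M a) ρ σ ≤ δ a ρ σ) ∧
      (∀ a ∈ S.A, ∀ b ∈ S.A, ¬ pol b a → ∀ c ∈ S.C, ∀ ρ, S.Reachable ρ →
        δ a ρ (S.Ecmd b c ρ) = 0) :=
  secure_implies_pseudo_distances_general S hS pol hsec
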